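/- arXiv:1505.01394 — 4 statements merged into one kernel-verified Lean document; each statement's English description precedes it below -/
import Mathlib

section
/- Let C : ℝ^d → ℝ be integrable with spectral density f(ω) = (2π)^{−d} ∫_{ℝ^d} C(h)·e^{−i⟨ω,h⟩} dh, and let g₁, g₂ : ℝ^d → ℝ be integrable, square-integrable, even kernel functions with Fourier transforms ĝ_k(ω) = ∫_{ℝ^d} g_k(x)·e^{−i⟨ω,x⟩} dx (real-valued since g_k is real and even). Define, for k, ℓ ∈ {1, 2}, C_{kℓ}(h) = ∫_{ℝ^d} ∫_{ℝ^d} g_k(u)·g_ℓ(v)·C(u − v + h) du dv. Then the spectral densities satisfy f_{kℓ}(ω) = f(ω)·ĝ_k(ω)·ĝ_ℓ(ω), and consequently for every ω ∈ ℝ^d with f(ω) > 0, ĝ₁(ω) ≠ 0 and ĝ₂(ω) ≠ 0, the squared coherence |f₁₂(ω)|²/( f₁₁(ω)·f₂₂(ω) ) equals 1. -/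
/-!
Because `g₁` is even, `C₁₂ = g₁ ⋆ g₂ ⋆ C` is an iterated convolution, so its Fourier transform
factors as `ĝ₁ ĝ₂ Ĉ`. The transform of a real even function is real, hence
`|f₁₂|² = f² ĝ₁² ĝ₂² = f₁₁ f₂₂`.
-/

open MeasureTheory
open scoped RealInnerProductSpace

open Complex ComplexConjugate FourierTransform

namespace KernelConvolution

open Convolution ContinuousLinearMap

variable {V : Type*} [NormedAddCommGroup V] [InnerProductSpace ℝ V] [FiniteDimensional ℝ V]
  [MeasurableSpace V] [BorelSpace V]

theorem integral_mul_exp_neg_inner_eq_fourier (φ : V → ℂ) (ω : V) :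
    ∫ x, φ x * exp (-I * (⟪ω, x⟫ : ℂ)) = 𝓕 φ ((2 * Real.pi)⁻¹ • ω) := by
  rw [Real.fourier_eq']
  congr 1 with x
  have : -2 * Real.pi * ⟪x, (2 * Real.pi)⁻¹ • ω⟫ = -⟪ω, x⟫ := by
    rw [real_inner_smul_right, real_inner_comm]; field_simp
  rw [this, smul_eq_mul, mul_comm]
  push_cast; ring_nf

noncomputable def crossCovariance (g₁ g₂ C : V → ℝ) (h : V) : ℝ :=
  ∫ u, ∫ v, g₁ u * g₂ v * C (u - v + h)

theorem ofReal_crossCovariance_eq_convolution {g₁ g₂ C : V → ℝ} (hg₁ : ∀ x, g₁ (-x) = g₁ x)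
    (h : V) :
    (crossCovariance g₁ g₂ C h : ℂ) =
      ((fun x ↦ (g₁ x : ℂ)) ⋆[mul ℂ ℂ] ((fun x ↦ (g₂ x : ℂ)) ⋆[mul ℂ ℂ] fun x ↦ (C x : ℂ))) h := by
  simp only [crossCovariance, convolution_def, mul_apply']
  rw [← integral_neg_eq_self, ← integral_complex_ofReal]
  congr 1 with u
  rw [← integral_const_mul, ← integral_complex_ofReal]
  congr 1 with v
  simp only [hg₁]
  push_cast
  rw [show -u - v + h = h - u - v by abel]
  ring

theorem fourier_crossCovariance {g₁ g₂ C : V → ℝ} (hg₁ : Integrable g₁) (hg₂ : Integrable g₂)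
    (hC : Integrable C) (hg₁_even : ∀ x, g₁ (-x) = g₁ x) (ξ : V) :
    𝓕 (fun h ↦ (crossCovariance g₁ g₂ C h : ℂ)) ξ =
      𝓕 (fun x ↦ (g₁ x : ℂ)) ξ * 𝓕 (fun x ↦ (g₂ x : ℂ)) ξ * 𝓕 (fun x ↦ (C x : ℂ)) ξ := by
  simp_rw [ofReal_crossCovariance_eq_convolution hg₁_even]
  have hg₁' : Integrable fun x ↦ (g₁ x : ℂ) := hg₁.ofReal
  have hg₂' : Integrable fun x ↦ (g₂ x : ℂ) := hg₂.ofReal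
  have hC' : Integrable fun x ↦ (C x : ℂ) := hC.ofReal
  rw [Real.fourier_mul_convolution_eq hg₁' (hg₂'.integrable_convolution _ hC'),
    Real.fourier_mul_convolution_eq hg₂' hC', mul_assoc]

theorem conj_fourier_ofReal_of_even {g : V → ℝ} (hg : ∀ x, g (-x) = g x) (ξ : V) :
    conj (𝓕 (fun x ↦ (g x : ℂ)) ξ) = 𝓕 (fun x ↦ (g x : ℂ)) ξ := by
  rw [Real.fourier_eq, ← integral_conj, ← integral_neg_eq_self]
  congr 1 with x
  simp [Circle.smul_def, hg, inner_neg_left, ← Circle.coe_inv_eq_conj, AddChar.map_neg_eq_inv]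

end KernelConvolution

theorem normSq_ofReal_mul_mul_div_eq_one {F : ℝ} {a b : ℂ} (hF : F ≠ 0) (ha : conj a = a)
    (hb : conj b = b) (ha₀ : a ≠ 0) (hb₀ : b ≠ 0) :
    (normSq (F * a * b) : ℂ) / (F * a * a * (F * b * b)) = 1 := by
  rw [← mul_conj, map_mul, map_mul, conj_ofReal, ha, hb, div_eq_one_iff_eq (by simp [*])]
  ring

open KernelConvolution

theorem kernel_convolution_unit_coherence_general (d : ℕ)
    (C : EuclideanSpace ℝ (Fin d) → ℝ) (hC : Integrable C)
    (f : EuclideanSpace ℝ (Fin d) → ℝ)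
    (hf : ∀ ω, (f ω : ℂ) = (((2 * Real.pi) ^ d : ℝ) : ℂ)⁻¹ *
      ∫ h, (C h : ℂ) * Complex.exp (-Complex.I * (⟪ω, h⟫ : ℂ)))
    (g : Fin 2 → EuclideanSpace ℝ (Fin d) → ℝ)
    (hgi : ∀ k, Integrable (g k))
    (hge : ∀ k x, g k (-x) = g k x)
    (ghat : Fin 2 → EuclideanSpace ℝ (Fin d) → ℂ)
    (hghat : ∀ k ω, ghat k ω =
      ∫ x, (g k x : ℂ) * Complex.exp (-Complex.I * (⟪ω, x⟫ : ℂ)))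
    (Ckl : Fin 2 → Fin 2 → EuclideanSpace ℝ (Fin d) → ℝ)
    (hCkl : ∀ k l h, Ckl k l h = ∫ u, ∫ v, g k u * g l v * C (u - v + h))
    (fkl : Fin 2 → Fin 2 → EuclideanSpace ℝ (Fin d) → ℂ)
    (hfkl : ∀ k l ω, fkl k l ω = (((2 * Real.pi) ^ d : ℝ) : ℂ)⁻¹ *
      ∫ h, (Ckl k l h : ℂ) * Complex.exp (-Complex.I * (⟪ω, h⟫ : ℂ))) :
    (∀ k l ω, fkl k l ω = (f ω : ℂ) * ghat k ω * ghat l ω) ∧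
    (∀ ω, 0 < f ω → ghat 0 ω ≠ 0 → ghat 1 ω ≠ 0 →
      (Complex.normSq (fkl 0 1 ω) : ℂ) / (fkl 0 0 ω * fkl 1 1 ω) = 1) := by
  simp only [integral_mul_exp_neg_inner_eq_fourier] at hf hghat hfkl
  have hspectral : ∀ k l ω, fkl k l ω = f ω * ghat k ω * ghat l ω := by
    intro k l ω
    have hCkl' : Ckl k l = crossCovariance (g k) (g l) C := funext (hCkl k l)
    rw [hfkl, hCkl', fourier_crossCovariance (hgi k) (hgi l) hC (hge k), hf, hghat, hghat]
    ring
  have hreal : ∀ k ω, conj (ghat k ω) = ghat k ω := fun k ω ↦ by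
    rw [hghat]; exact conj_fourier_ofReal_of_even (hge k) _
  refine ⟨hspectral, fun ω hf₀ h₀ h₁ ↦ ?_⟩
  rw [hspectral, hspectral, hspectral]
  exact normSq_ofReal_mul_mul_div_eq_one hf₀.ne' (hreal 0 ω) (hreal 1 ω) h₀ h₁

/-- Kernel convolution against a common latent process forces constant unit coherence:
with `C_kℓ(h) = ∫∫ g_k(u)·g_ℓ(v)·C(u − v + h) du dv`, the spectral densities satisfy
`f_kℓ = f·ĝ_k·ĝ_ℓ`, and the squared coherence equals `1` wherever `f > 0` and the `ĝ_k`
are nonzero. -/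
theorem kernel_convolution_unit_coherence (d : ℕ)
    (C : EuclideanSpace ℝ (Fin d) → ℝ) (hC : Integrable C)
    (f : EuclideanSpace ℝ (Fin d) → ℝ)
    (hf : ∀ ω, (f ω : ℂ) = (((2 * Real.pi) ^ d : ℝ) : ℂ)⁻¹ *
      ∫ h, (C h : ℂ) * Complex.exp (-Complex.I * (⟪ω, h⟫ : ℂ)))
    (g : Fin 2 → EuclideanSpace ℝ (Fin d) → ℝ)
    (hgi : ∀ k, Integrable (g k)) (hg2 : ∀ k, MemLp (g k) 2 volume)
    (hge : ∀ k x, g k (-x) = g k x)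
    (ghat : Fin 2 → EuclideanSpace ℝ (Fin d) → ℂ)
    (hghat : ∀ k ω, ghat k ω =
      ∫ x, (g k x : ℂ) * Complex.exp (-Complex.I * (⟪ω, x⟫ : ℂ)))
    (Ckl : Fin 2 → Fin 2 → EuclideanSpace ℝ (Fin d) → ℝ)
    (hCkl : ∀ k l h, Ckl k l h = ∫ u, ∫ v, g k u * g l v * C (u - v + h))
    (fkl : Fin 2 → Fin 2 → EuclideanSpace ℝ (Fin d) → ℂ)
    (hfkl : ∀ k l ω, fkl k l ω = (((2 * Real.pi) ^ d : ℝ) : ℂ)⁻¹ *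
      ∫ h, (Ckl k l h : ℂ) * Complex.exp (-Complex.I * (⟪ω, h⟫ : ℂ))) :
    (∀ k l ω, fkl k l ω = (f ω : ℂ) * ghat k ω * ghat l ω) ∧
    (∀ ω, 0 < f ω → ghat 0 ω ≠ 0 → ghat 1 ω ≠ 0 →
      (Complex.normSq (fkl 0 1 ω) : ℂ) / (fkl 0 0 ω * fkl 1 1 ω) = 1) :=
  kernel_convolution_unit_coherence_general d C hC f hf g hgi hge ghat hghat Ckl hCkl fkl hfkl
end

section
/- Fix d ≥ 1, ν > 0, a > 0, a₁₂ > 0 and ρ ≠ 0, and define the squared coherence of the common-smoothness, equal marginal range bivariate Matérn model, γ(ω)² = ρ² · ( a₁₂²/a² )^{2ν} · ( ( a² + ‖ω‖² )² / ( a₁₂² + ‖ω‖² )² )^{ν + d/2}. Then: (i) if a₁₂ < a, γ(ω)² is a strictly decreasing function of ‖ω‖, so coherence is greater at low frequencies than at high frequencies; and (ii) if a₁₂ > a, γ(ω)² is a strictly increasing function of ‖ω‖, i.e., ‖ω₁‖ < ‖ω₂‖ implies γ(ω₁)² < γ(ω₂)². -/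
/-!
The coherence depends on `ω` only through `t = ‖ω‖²`, and there only through the ratio
`(a² + t) / (a₁₂² + t)`. On `t ≥ 0` this ratio is strictly decreasing when `a₁₂ < a` and strictly
increasing when `a < a₁₂`, and `x ↦ K · (x²)^p` with `K, p > 0` is strictly increasing on `x ≥ 0`.
-/

open Set

section AddDivAdd

variable {b c : ℝ}

theorem strictAntiOn_add_div_add (hc : 0 < c) (hcb : c < b) :
    StrictAntiOn (fun t : ℝ => (b + t) / (c + t)) (Ici 0) := by
  intro t₁ (ht₁ : 0 ≤ t₁) t₂ (ht₂ : 0 ≤ t₂) ht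
  rw [div_lt_div_iff₀ (by linarith) (by linarith)]
  nlinarith

theorem strictMonoOn_add_div_add (hc : 0 < c) (hbc : b < c) :
    StrictMonoOn (fun t : ℝ => (b + t) / (c + t)) (Ici 0) := by
  intro t₁ (ht₁ : 0 ≤ t₁) t₂ (ht₂ : 0 ≤ t₂) ht
  rw [div_lt_div_iff₀ (by linarith) (by linarith)]
  nlinarith

theorem mapsTo_add_div_add_Ici (hb : 0 ≤ b) (hc : 0 ≤ c) :
    MapsTo (fun t : ℝ => (b + t) / (c + t)) (Ici 0) (Ici 0) := by
  intro t (ht : 0 ≤ t)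
  show 0 ≤ (b + t) / (c + t)
  positivity

end AddDivAdd

theorem strictMonoOn_const_mul_rpow_sq {K p : ℝ} (hK : 0 < K) (hp : 0 < p) :
    StrictMonoOn (fun x : ℝ => K * (x ^ 2) ^ p) (Ici 0) := by
  intro x (hx : 0 ≤ x) y (hy : 0 ≤ y) hxy
  have hsq : x ^ 2 < y ^ 2 := pow_lt_pow_left₀ hxy hx two_ne_zero
  exact mul_lt_mul_of_pos_left (Real.rpow_lt_rpow (sq_nonneg x) hsq hp) hK

section

variable {K p b c : ℝ}

theorem strictAntiOn_const_mul_rpow_add_sq_div_add_sq (hK : 0 < K) (hp : 0 < p)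
    (hc : 0 < c) (hcb : c < b) :
    StrictAntiOn (fun t : ℝ => K * ((b + t) ^ 2 / (c + t) ^ 2) ^ p) (Ici 0) := by
  simp_rw [← div_pow]
  exact (strictMonoOn_const_mul_rpow_sq hK hp).comp_strictAntiOn
    (strictAntiOn_add_div_add hc hcb) (mapsTo_add_div_add_Ici (hc.trans hcb).le hc.le)

theorem strictMonoOn_const_mul_rpow_add_sq_div_add_sq (hK : 0 < K) (hp : 0 < p)
    (hb : 0 < b) (hbc : b < c) :
    StrictMonoOn (fun t : ℝ => K * ((b + t) ^ 2 / (c + t) ^ 2) ^ p) (Ici 0) := by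
  simp_rw [← div_pow]
  exact (strictMonoOn_const_mul_rpow_sq hK hp).comp
    (strictMonoOn_add_div_add (hb.trans hbc) hbc)
    (mapsTo_add_div_add_Ici hb.le (hb.trans hbc).le)

end

theorem bivariate_matern_cross_range_monotone_coherence_general (d : ℕ)
    (ν a a₁₂ ρ : ℝ)
    (hν : 0 < ν) (ha : 0 < a) (ha₁₂ : 0 < a₁₂) (hρ : ρ ≠ 0)
    (γsq : EuclideanSpace ℝ (Fin d) → ℝ)
    (hγsq : ∀ ω, γsq ω =
      ρ ^ 2 * (a₁₂ ^ 2 / a ^ 2) ^ (2 * ν) *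
        ((a ^ 2 + ‖ω‖ ^ 2) ^ 2 / (a₁₂ ^ 2 + ‖ω‖ ^ 2) ^ 2) ^ (ν + (d : ℝ) / 2)) :
    (a₁₂ < a →
      ∀ ω₁ ω₂ : EuclideanSpace ℝ (Fin d), ‖ω₁‖ < ‖ω₂‖ → γsq ω₂ < γsq ω₁) ∧
    (a < a₁₂ →
      ∀ ω₁ ω₂ : EuclideanSpace ℝ (Fin d), ‖ω₁‖ < ‖ω₂‖ → γsq ω₁ < γsq ω₂) := by
  have hp : 0 < ν + (d : ℝ) / 2 := by positivity
  have hK : 0 < ρ ^ 2 * (a₁₂ ^ 2 / a ^ 2) ^ (2 * ν) := by positivity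
  have hnorm_sq {ω₁ ω₂ : EuclideanSpace ℝ (Fin d)} (hω : ‖ω₁‖ < ‖ω₂‖) :
      ‖ω₁‖ ^ 2 < ‖ω₂‖ ^ 2 :=
    pow_lt_pow_left₀ hω (norm_nonneg _) two_ne_zero
  refine ⟨fun h ω₁ ω₂ hω => ?_, fun h ω₁ ω₂ hω => ?_⟩
  · rw [hγsq, hγsq]
    exact strictAntiOn_const_mul_rpow_add_sq_div_add_sq hK hp (by positivity) (by gcongr)
      (sq_nonneg ‖ω₁‖) (sq_nonneg ‖ω₂‖) (hnorm_sq hω)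
  · rw [hγsq, hγsq]
    exact strictMonoOn_const_mul_rpow_add_sq_div_add_sq hK hp (by positivity) (by gcongr)
      (sq_nonneg ‖ω₁‖) (sq_nonneg ‖ω₂‖) (hnorm_sq hω)

/-- For the common-smoothness, equal-marginal-range bivariate Matérn, the squared coherence
`γ(ω)² = ρ²·(a₁₂²/a²)^{2ν}·((a² + ‖ω‖²)²/(a₁₂² + ‖ω‖²)²)^{ν + d/2}` is strictly decreasing
in `‖ω‖` when `a₁₂ < a`, and strictly increasing in `‖ω‖` when `a₁₂ > a`. -/
theorem bivariate_matern_cross_range_monotone_coherence (d : ℕ) (hd : 1 ≤ d)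
    (ν a a₁₂ ρ : ℝ)
    (hν : 0 < ν) (ha : 0 < a) (ha₁₂ : 0 < a₁₂) (hρ : ρ ≠ 0)
    (γsq : EuclideanSpace ℝ (Fin d) → ℝ)
    (hγsq : ∀ ω, γsq ω =
      ρ ^ 2 * (a₁₂ ^ 2 / a ^ 2) ^ (2 * ν) *
        ((a ^ 2 + ‖ω‖ ^ 2) ^ 2 / (a₁₂ ^ 2 + ‖ω‖ ^ 2) ^ 2) ^ (ν + (d : ℝ) / 2)) :
    (a₁₂ < a →
      ∀ ω₁ ω₂ : EuclideanSpace ℝ (Fin d), ‖ω₁‖ < ‖ω₂‖ → γsq ω₂ < γsq ω₁) ∧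
    (a < a₁₂ →
      ∀ ω₁ ω₂ : EuclideanSpace ℝ (Fin d), ‖ω₁‖ < ‖ω₂‖ → γsq ω₁ < γsq ω₂) :=
  bivariate_matern_cross_range_monotone_coherence_general d ν a a₁₂ ρ hν ha ha₁₂ hρ γsq hγsq
end

section
/- Let f₁, f₂ : ℝ^d → ℝ satisfy f₁(ω) > 0 and f₂(ω) > 0 for all ω ∈ ℝ^d, and let b₁₂, b₂₁ ∈ ℝ. Define f₁₁(ω) = f₁(ω) + b₁₂²·f₂(ω), f₂₂(ω) = b₂₁²·f₁(ω) + f₂(ω), and f₁₂(ω) = b₂₁·f₁(ω) + b₁₂·f₂(ω). Then the squared coherence f₁₂(ω)²/( f₁₁(ω)·f₂₂(ω) ) equals 1 for all ω ∈ ℝ^d if and only if b₁₂·b₂₁ = 1. (Indeed, f₁₁(ω)·f₂₂(ω) − f₁₂(ω)² = (1 − b₁₂·b₂₁)²·f₁(ω)·f₂(ω).) -/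
theorem lmc_spectral_det_eq {R : Type*} [CommRing R] (a c b12 b21 : R) :
    (a + b12 ^ 2 * c) * (b21 ^ 2 * a + c) - (b21 * a + b12 * c) ^ 2 =
      (1 - b12 * b21) ^ 2 * a * c := by
  ring

theorem lmc_coherence_eq_one_iff {K : Type*} [Field K] [LinearOrder K] [IsStrictOrderedRing K]
    {a c : K} (ha : 0 < a) (hc : 0 < c) (b12 b21 : K) :
    (b21 * a + b12 * c) ^ 2 / ((a + b12 ^ 2 * c) * (b21 ^ 2 * a + c)) = 1 ↔ b12 * b21 = 1 := by
  have hden : 0 < (a + b12 ^ 2 * c) * (b21 ^ 2 * a + c) := by positivity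
  rw [div_eq_one_iff_eq hden.ne', eq_comm, ← sub_eq_zero, lmc_spectral_det_eq, mul_assoc,
    mul_eq_zero, or_iff_left (mul_pos ha hc).ne', sq_eq_zero_iff, sub_eq_zero, eq_comm]

/-- In the LMC with `b₁₁ = b₂₂ = 1`, where `f₁₁ = f₁ + b₁₂²·f₂`, `f₂₂ = b₂₁²·f₁ + f₂` and
`f₁₂ = b₂₁·f₁ + b₁₂·f₂`, the squared coherence is identically `1` iff `b₁₂·b₂₁ = 1`;
indeed `f₁₁·f₂₂ − f₁₂² = (1 − b₁₂·b₂₁)²·f₁·f₂`. -/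
theorem lmc_unit_coherence_iff (d : ℕ)
    (f1 f2 : EuclideanSpace ℝ (Fin d) → ℝ)
    (hf1 : ∀ ω, 0 < f1 ω) (hf2 : ∀ ω, 0 < f2 ω)
    (b12 b21 : ℝ) :
    ((∀ ω, (b21 * f1 ω + b12 * f2 ω) ^ 2 /
        ((f1 ω + b12 ^ 2 * f2 ω) * (b21 ^ 2 * f1 ω + f2 ω)) = 1) ↔
      b12 * b21 = 1) ∧
    (∀ ω, (f1 ω + b12 ^ 2 * f2 ω) * (b21 ^ 2 * f1 ω + f2 ω) -
        (b21 * f1 ω + b12 * f2 ω) ^ 2 =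
      (1 - b12 * b21) ^ 2 * f1 ω * f2 ω) := by
  have coherence_iff ω := lmc_coherence_eq_one_iff (hf1 ω) (hf2 ω) b12 b21
  refine ⟨⟨fun h => (coherence_iff 0).1 (h 0), fun h ω => (coherence_iff ω).2 h⟩, fun ω => ?_⟩
  exact lmc_spectral_det_eq (f1 ω) (f2 ω) b12 b21
end

section
/- Let p ≥ 1 and let f_{ij} : ℝ^d → ℂ be integrable functions for i, j ∈ {1, …, p} such that for every ω ∈ ℝ^d the p × p matrix ( f_{ij}(ω) )_{i,j} is Hermitian positive semidefinite. Define C_{ij}(h) = ∫_{ℝ^d} e^{i⟨ω,h⟩}·f_{ij}(ω) dω for h ∈ ℝ^d. Then the matrix-valued function C = (C_{ij}) is nonnegative definite: for every n ≥ 1, all locations s₁, …, s_n ∈ ℝ^d and all complex numbers a_{ik} (1 ≤ i ≤ p, 1 ≤ k ≤ n), the quantity Σ_{i=1}^p Σ_{j=1}^p Σ_{k=1}^n Σ_{ℓ=1}^n a_{ik}·conj(a_{jℓ})·C_{ij}(s_k − s_ℓ) is a nonnegative real number. -/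
/-!
With `b_i(ω) = ∑_k a_ik e^{i⟨ω, s_k⟩}`, the character identity
`e^{i⟨ω, s_k - s_l⟩} = e^{i⟨ω, s_k⟩} · conj e^{i⟨ω, s_l⟩}` turns the quadratic form into
`∫ ∑_{i,j} b_i(ω) conj (b_j(ω)) f_ij(ω) dω`. The integrand is a Hermitian form of the positive
semidefinite matrix `f(ω)`, hence nonnegative in the partial order of `ℂ` (real and `≥ 0`),
and so is its integral.
-/

open MeasureTheory Complex
open scoped RealInnerProductSpace ComplexOrder ComplexConjugate Matrix

section InnerProductSpace

variable {E : Type*} [NormedAddCommGroup E] [InnerProductSpace ℝ E]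

theorem exp_I_inner_sub (ω x y : E) :
    exp (I * ⟪ω, x - y⟫) = exp (I * ⟪ω, x⟫) * conj (exp (I * ⟪ω, y⟫)) := by
  rw [← exp_conj, ← exp_add, inner_sub_right]
  simp only [map_mul, conj_I, conj_ofReal, ofReal_sub]
  ring_nf

theorem MeasureTheory.Integrable.exp_I_inner_mul [MeasurableSpace E] [OpensMeasurableSpace E]
    {μ : Measure E} {g : E → ℂ} (hg : Integrable g μ) (h : E) :
    Integrable (fun ω => exp (I * ⟪ω, h⟫) * g ω) μ :=
  hg.bdd_mul (c := 1) (by fun_prop) (.of_forall fun ω => by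
    rw [mul_comm, norm_exp_ofReal_mul_I])

end InnerProductSpace

section Algebra

variable {ι κ R : Type*} [Fintype ι] [Fintype κ] [CommRing R] [StarRing R]

theorem Matrix.PosSemidef.sum_mul_conj_mul_nonneg [PartialOrder R] {F : Matrix ι ι R}
    (hF : F.PosSemidef) (b : ι → R) : 0 ≤ ∑ i, ∑ j, b i * conj (b j) * F i j := by
  convert hF.dotProduct_mulVec_nonneg (star b) using 1
  simp only [dotProduct, Matrix.mulVec, Finset.mul_sum, Pi.star_apply, star_star,
    starRingEnd_apply]
  refine Fintype.sum_congr _ _ fun i => Fintype.sum_congr _ _ fun j => ?_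
  ring

theorem Matrix.sum_mul_conj_mul_eq_mulVec_mul_conj_mul (A : Matrix ι κ R) (e : κ → R)
    (F : Matrix ι ι R) :
    ∑ i, ∑ j, ∑ k, ∑ l, A i k * conj (A j l) * (e k * conj (e l) * F i j) =
      ∑ i, ∑ j, (A *ᵥ e) i * conj ((A *ᵥ e) j) * F i j := by
  simp_rw [Matrix.mulVec, dotProduct, map_sum, Finset.sum_mul_sum, Finset.sum_mul]
  refine Fintype.sum_congr _ _ fun i => Fintype.sum_congr _ _ fun j =>
    Fintype.sum_congr _ _ fun k => Fintype.sum_congr _ _ fun l => ?_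
  rw [map_mul]
  ring

end Algebra

theorem cramer_sufficiency_general (d p : ℕ)
    (f : Fin p → Fin p → EuclideanSpace ℝ (Fin d) → ℂ)
    (hfint : ∀ i j, Integrable (f i j))
    (hpsd : ∀ ω : EuclideanSpace ℝ (Fin d),
      (Matrix.of fun i j => f i j ω).PosSemidef)
    (C : Fin p → Fin p → EuclideanSpace ℝ (Fin d) → ℂ)
    (hC : ∀ i j h, C i j h = ∫ ω, Complex.exp (Complex.I * (⟪ω, h⟫ : ℂ)) * f i j ω) :
    ∀ (n : ℕ) (s : Fin n → EuclideanSpace ℝ (Fin d)) (a : Fin p → Fin n → ℂ),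
      0 ≤ (∑ i, ∑ j, ∑ k, ∑ l,
        a i k * (starRingEnd ℂ) (a j l) * C i j (s k - s l)).re ∧
      (∑ i, ∑ j, ∑ k, ∑ l,
        a i k * (starRingEnd ℂ) (a j l) * C i j (s k - s l)).im = 0 := by
  intro n s a
  have hint : ∀ i j k l, Integrable fun ω =>
      a i k * conj (a j l) * (exp (I * ⟪ω, s k - s l⟫) * f i j ω) :=
    fun i j k l => ((hfint i j).exp_I_inner_mul _).const_mul _
  have hQ : ∑ i, ∑ j, ∑ k, ∑ l, a i k * conj (a j l) * C i j (s k - s l) =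
      ∫ ω, ∑ i, ∑ j, ∑ k, ∑ l, a i k * conj (a j l) * (exp (I * ⟪ω, s k - s l⟫) * f i j ω) := by
    simp only [hC, ← integral_const_mul]
    rw [integral_finsetSum _ fun _ _ => by fun_prop (disch := apply hint)]
    simp (disch := fun_prop (disch := apply hint)) only [integral_finsetSum]
  have hQ_nonneg : 0 ≤ ∑ i, ∑ j, ∑ k, ∑ l, a i k * conj (a j l) * C i j (s k - s l) := by
    rw [hQ]
    refine integral_nonneg fun ω => ?_
    simp only [exp_I_inner_sub]
    rw [Matrix.sum_mul_conj_mul_eq_mulVec_mul_conj_mul a _ fun i j => f i j ω]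
    exact (hpsd ω).sum_mul_conj_mul_nonneg _
  exact ⟨(nonneg_iff.mp hQ_nonneg).1, (nonneg_iff.mp hQ_nonneg).2.symm⟩

/-- Sufficiency direction of Cramér's theorem (densities case): if the matrix of integrable
spectral densities `(f_ij(ω))` is Hermitian positive semidefinite for every `ω`, then the
matrix-valued function `C_ij(h) = ∫ e^{i⟨ω,h⟩}·f_ij(ω) dω` is nonnegative definite. -/
theorem cramer_sufficiency (d p : ℕ) (hp : 1 ≤ p)
    (f : Fin p → Fin p → EuclideanSpace ℝ (Fin d) → ℂ)
    (hfint : ∀ i j, Integrable (f i j))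
    (hpsd : ∀ ω : EuclideanSpace ℝ (Fin d),
      (Matrix.of fun i j => f i j ω).PosSemidef)
    (C : Fin p → Fin p → EuclideanSpace ℝ (Fin d) → ℂ)
    (hC : ∀ i j h, C i j h = ∫ ω, Complex.exp (Complex.I * (⟪ω, h⟫ : ℂ)) * f i j ω) :
    ∀ (n : ℕ) (s : Fin n → EuclideanSpace ℝ (Fin d)) (a : Fin p → Fin n → ℂ),
      0 ≤ (∑ i, ∑ j, ∑ k, ∑ l,
        a i k * (starRingEnd ℂ) (a j l) * C i j (s k - s l)).re ∧
      (∑ i, ∑ j, ∑ k, ∑ l,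
        a i k * (starRingEnd ℂ) (a j l) * C i j (s k - s l)).im = 0 :=
  cramer_sufficiency_general d p f hfint hpsd C hC
end
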